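/- If R is a locally unital ring graded by a groupoid G, then R is strongly graded (R_s R_t = R_{st} for all composable s, t) if and only if R_s R_{s⁻¹} = R_{c(s)} for all s in G. -/

import Mathlib

open Pointwise CategoryTheory

/-- A locally unital ring `R` graded by a small category `G` (with object type `Obj`):
`R = ⊕_{s ∈ mor(G)} R_s`, `R_s R_t ⊆ R_{st}` for composable pairs, `R_s R_t = 0` for
non-composable pairs, and each identity component `R_e` is a unital ring, every `R_s` being
a unital `R_{c(s)}`-`R_{d(s)}`-bimodule. -/
structure CatGradedRing (Obj : Type*) [Category Obj] (R : Type*) [NonUnitalRing R] where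
  /-- the homogeneous component `R_s` -/
  deg : ∀ {e f : Obj}, (e ⟶ f) → AddSubgroup R
  /-- `R` is the internal direct sum of the components -/
  isInternal :
    letI := Classical.decEq (Σ e f : Obj, e ⟶ f)
    DirectSum.IsInternal (fun s : Σ e f : Obj, e ⟶ f => deg s.2.2)
  /-- `R_s R_t ⊆ R_{st}` whenever `d(s) = c(t)` -/
  mul_le : ∀ {e f g : Obj} (s : f ⟶ g) (t : e ⟶ f), deg s * deg t ≤ deg (t ≫ s)
  /-- `R_s R_t = 0` for non-composable pairs -/
  mul_eq_bot : ∀ {e f x y : Obj} (s : e ⟶ f) (t : x ⟶ y), y ≠ e → deg s * deg t = ⊥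
  /-- the local unit `1_{R_e}` -/
  unit : Obj → R
  unit_mem : ∀ e : Obj, unit e ∈ deg (𝟙 e)
  unit_mul : ∀ {e f : Obj} (s : e ⟶ f), ∀ x ∈ deg s, unit f * x = x
  mul_unit : ∀ {e f : Obj} (s : e ⟶ f), ∀ x ∈ deg s, x * unit e = x

/-- The grading is strong: `R_s R_t = R_{st}` for all composable pairs. -/
def CatGradedRing.IsStrong {Obj : Type*} [Category Obj] {R : Type*} [NonUnitalRing R]
    (g : CatGradedRing Obj R) : Prop :=
  ∀ {e f h : Obj} (s : f ⟶ h) (t : e ⟶ f), g.deg s * g.deg t = g.deg (t ≫ s)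

namespace AddSubgroup

variable {R : Type*} [NonUnitalRing R]

lemma mul_mem_mul {A B : AddSubgroup R} {a b : R} (ha : a ∈ A) (hb : b ∈ B) : a * b ∈ A * B :=
  AddSubmonoid.mul_mem_mul (R := R) ha hb

protected lemma mul_le_mul {A B C D : AddSubgroup R} (hAB : A ≤ B) (hCD : C ≤ D) :
    A * C ≤ B * D :=
  AddSubmonoid.mul_le_mul (R := R) hAB hCD

protected lemma mul_assoc (A B C : AddSubgroup R) : A * B * C = A * (B * C) :=
  toAddSubmonoid_injective (mul_assoc A.toAddSubmonoid B.toAddSubmonoid C.toAddSubmonoid)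

end AddSubgroup

namespace CatGradedRing

variable {Obj : Type*} {R : Type*} [NonUnitalRing R]

lemma deg_le_deg_id_mul [Category Obj] (g : CatGradedRing Obj R) {e f : Obj} (s : e ⟶ f) :
    g.deg s ≤ g.deg (𝟙 f) * g.deg s := fun x hx => by
  simpa only [g.unit_mul s x hx] using AddSubgroup.mul_mem_mul (g.unit_mem f) hx

lemma deg_comp_le_mul_of_mul_inv_eq [Groupoid Obj] (g : CatGradedRing Obj R) {e f h : Obj}
    (s : f ⟶ h) (t : e ⟶ f) (hs : g.deg s * g.deg (Groupoid.inv s) = g.deg (𝟙 h)) :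
    g.deg (t ≫ s) ≤ g.deg s * g.deg t :=
  calc g.deg (t ≫ s)
      ≤ g.deg (𝟙 h) * g.deg (t ≫ s) := g.deg_le_deg_id_mul (t ≫ s)
    _ = g.deg s * (g.deg (Groupoid.inv s) * g.deg (t ≫ s)) := by
        rw [← hs, AddSubgroup.mul_assoc]
    _ ≤ g.deg s * g.deg ((t ≫ s) ≫ Groupoid.inv s) :=
        AddSubgroup.mul_le_mul le_rfl (g.mul_le _ _)
    _ = g.deg s * g.deg t := by simp

end CatGradedRing

/-- A locally unital ring graded by a groupoid `G` is strongly graded iff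
`R_s R_{s⁻¹} = R_{c(s)}` for every morphism `s` of `G`. -/
theorem catGradedRing_strong_iff_inv {Obj : Type*} [Groupoid Obj] {R : Type*} [NonUnitalRing R]
    (g : CatGradedRing Obj R) :
    g.IsStrong ↔
      ∀ {e f : Obj} (s : e ⟶ f), g.deg s * g.deg (Groupoid.inv s) = g.deg (𝟙 f) := by
  refine ⟨fun hstrong _ _ s => by simpa using hstrong s (Groupoid.inv s), fun hinv _ _ _ s t => ?_⟩
  exact le_antisymm (g.mul_le s t) (g.deg_comp_le_mul_of_mul_inv_eq s t (hinv s))
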